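/- For any set S ⊆ V and any vertex u ∉ S, B(S ∪ {u}) = B(S) + B(u|S), where B(u|S) = ∑_{s,t ≠ u} σ_{s,t}(u|S)/σ_{s,t} and σ_{s,t}(u|S) is the number of s-t shortest paths that avoid all internal vertices in S but have u as an internal vertex. -/
import Mathlib


variable {V : Type*} [Fintype V] [DecidableEq V]

/-- A walk is a shortest path: it is a path whose length equals the graph distance. -/
def IsShortestPath (G : SimpleGraph V) {s t : V} (p : G.Walk s t) : Prop :=
  p.IsPath ∧ p.length = G.dist s t

/-- The internal vertices of a walk (its support with the two endpoints removed). -/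
def internals {G : SimpleGraph V} {s t : V} (p : G.Walk s t) : List V :=
  p.support.tail.dropLast

/-- `σ_{s,t}`: the number of shortest `s`-`t` paths. -/
noncomputable def sigma (G : SimpleGraph V) (s t : V) : ℕ :=
  {p : G.Walk s t | IsShortestPath G p}.ncard

/-- `σ_{s,t}(S)`: the number of shortest `s`-`t` paths having an internal vertex in `S`. -/
noncomputable def sigmaSet (G : SimpleGraph V) (S : Finset V) (s t : V) : ℕ :=
  {p : G.Walk s t | IsShortestPath G p ∧ ∃ v ∈ internals p, v ∈ S}.ncard

/-- Betweenness centrality of a set of vertices,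
`B(S) = ∑_{s,t} σ_{s,t}(S) / σ_{s,t}` (terms with `σ_{s,t} = 0` are `0`). -/
noncomputable def bwc (G : SimpleGraph V) (S : Finset V) : ℝ :=
  ∑ s : V, ∑ t : V, (sigmaSet G S s t : ℝ) / (sigma G s t : ℝ)


/-- `σ_{s,t}(u|S)`: the number of shortest `s`-`t` paths that avoid all internal vertices
in `S` but have `u` as an internal vertex. -/
noncomputable def sigmaCond (G : SimpleGraph V) (u : V) (S : Finset V) (s t : V) : ℕ :=
  {p : G.Walk s t | IsShortestPath G p ∧ (∀ v ∈ internals p, v ∉ S) ∧ u ∈ internals p}.ncard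

/-- Adaptive betweenness centrality `B(u|S) = ∑_{s,t ≠ u} σ_{s,t}(u|S)/σ_{s,t}`. -/
noncomputable def abwc (G : SimpleGraph V) (u : V) (S : Finset V) : ℝ :=
  ∑ s ∈ Finset.univ.erase u, ∑ t ∈ Finset.univ.erase u,
    (sigmaCond G u S s t : ℝ) / (sigma G s t : ℝ)

set_option linter.unusedSectionVars false
set_option linter.unusedVariables false

-- internals is sublist of support
lemma internals_subset {G : SimpleGraph V} {s t : V} (p : G.Walk s t) :
    ∀ v ∈ internals p, v ∈ p.support := by
  intro v hv
  have : v ∈ p.support.tail := List.dropLast_subset _ hv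
  exact List.tail_subset _ this

lemma finite_sp (G : SimpleGraph V) (s t : V) (P : G.Walk s t → Prop) :
    {p : G.Walk s t | IsShortestPath G p ∧ P p}.Finite := by
  classical
  have : {p : G.Walk s t | IsShortestPath G p ∧ P p} ⊆
      {p : G.Walk s t | p.length = G.dist s t} := fun p hp => hp.1.2
  exact Set.Finite.subset (Set.toFinite _) this

lemma finite_sp' (G : SimpleGraph V) (s t : V) :
    {p : G.Walk s t | IsShortestPath G p}.Finite := by
  classical
  exact Set.Finite.subset (Set.toFinite {p : G.Walk s t | p.length = G.dist s t})
    (fun p hp => hp.2)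

-- u not internal if endpoint, for paths
lemma not_mem_internals_left {G : SimpleGraph V} {t : V} {u : V} (p : G.Walk u t)
    (hp : p.IsPath) : u ∉ internals p := by
  intro h
  have h1 : u ∈ p.support.tail := List.dropLast_subset _ h
  have := hp.support_nodup
  rw [p.support_eq_cons] at this
  exact (List.nodup_cons.mp this).1 h1

lemma not_mem_internals_right {G : SimpleGraph V} {s : V} {u : V} (p : G.Walk s u)
    (hp : p.IsPath) : u ∉ internals p := by
  intro h
  unfold internals at h
  rcases List.eq_nil_or_concat p.support.tail with h0 | ⟨l, a, hla⟩
  · rw [h0] at h; simp at h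
  · rw [List.concat_eq_append] at hla
    rw [hla, List.dropLast_concat] at h
    -- a = last of support = u
    have hnd := hp.support_nodup
    rw [p.support_eq_cons, hla] at hnd
    have hnd2 : (l ++ [a]).Nodup := (List.nodup_cons.mp hnd).2
    have ha : a = u := by
      have h2 : p.support = s :: (l ++ [a]) := by rw [p.support_eq_cons, hla]
      have := p.getLast_support
      rw [List.getLast_congr (by simp) (by simp) h2] at this
      simpa [List.getLast_append] using this
    subst ha
    have := List.disjoint_of_nodup_append hnd2
    exact this h (by simp)

lemma sigmaSet_insert (G : SimpleGraph V) (S : Finset V) (u : V) (s t : V) :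
    sigmaSet G (insert u S) s t = sigmaSet G S s t + sigmaCond G u S s t := by
  classical
  unfold sigmaSet sigmaCond
  have hset : {p : G.Walk s t | IsShortestPath G p ∧ ∃ v ∈ internals p, v ∈ insert u S}
      = {p : G.Walk s t | IsShortestPath G p ∧ ∃ v ∈ internals p, v ∈ S}
        ∪ {p : G.Walk s t | IsShortestPath G p ∧ (∀ v ∈ internals p, v ∉ S) ∧ u ∈ internals p} := by
    ext p
    simp only [Set.mem_setOf_eq, Set.mem_union, Finset.mem_insert]
    constructor
    · rintro ⟨hsp, v, hv, hvS⟩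
      by_cases hS : ∃ w ∈ internals p, w ∈ S
      · exact Or.inl ⟨hsp, hS⟩
      · push_neg at hS
        rcases hvS with rfl | hvS
        · exact Or.inr ⟨hsp, hS, hv⟩
        · exact absurd hvS (hS v hv)
    · rintro (⟨hsp, v, hv, hvS⟩ | ⟨hsp, hS, hui⟩)
      · exact ⟨hsp, v, hv, Or.inr hvS⟩
      · exact ⟨hsp, u, hui, Or.inl rfl⟩
  rw [hset, Set.ncard_union_eq ?_ (finite_sp G s t _) (finite_sp G s t _)]
  rw [Set.disjoint_left]
  rintro p ⟨_, v, hv, hvS⟩ ⟨_, hS, _⟩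
  exact hS v hv hvS

lemma sigmaCond_left (G : SimpleGraph V) (S : Finset V) (u : V) (t : V) :
    sigmaCond G u S u t = 0 := by
  unfold sigmaCond
  have h : {p : G.Walk u t | IsShortestPath G p ∧ (∀ v ∈ internals p, v ∉ S) ∧ u ∈ internals p} = ∅ := by
    ext p
    simp only [Set.mem_setOf_eq, Set.mem_empty_iff_false, iff_false]
    rintro ⟨hsp, _, hui⟩
    exact not_mem_internals_left p hsp.1 hui
  rw [h, Set.ncard_empty]

lemma sigmaCond_right (G : SimpleGraph V) (S : Finset V) (u : V) (s : V) :
    sigmaCond G u S s u = 0 := by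
  unfold sigmaCond
  have h : {p : G.Walk s u | IsShortestPath G p ∧ (∀ v ∈ internals p, v ∉ S) ∧ u ∈ internals p} = ∅ := by
    ext p
    simp only [Set.mem_setOf_eq, Set.mem_empty_iff_false, iff_false]
    rintro ⟨hsp, _, hui⟩
    exact not_mem_internals_right p hsp.1 hui
  rw [h, Set.ncard_empty]

/-- `B(S ∪ {u}) = B(S) + B(u|S)`. -/
theorem bwc_insert (G : SimpleGraph V) (S : Finset V) (u : V) (hu : u ∉ S) :
    bwc G (insert u S) = bwc G S + abwc G u S := by
  have key : bwc G (insert u S) = bwc G S +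
      ∑ s : V, ∑ t : V, (sigmaCond G u S s t : ℝ) / (sigma G s t : ℝ) := by
    unfold bwc
    rw [← Finset.sum_add_distrib]
    apply Finset.sum_congr rfl
    intro s _
    rw [← Finset.sum_add_distrib]
    apply Finset.sum_congr rfl
    intro t _
    rw [sigmaSet_insert G S u s t, Nat.cast_add, add_div]
  rw [key]
  congr 1
  unfold abwc
  rw [← Finset.sum_erase (a := u) _ (by
    apply Finset.sum_eq_zero
    intro t _
    rw [sigmaCond_left]
    simp)]
  apply Finset.sum_congr rfl
  intro s _
  rw [← Finset.sum_erase (a := u) _ (by rw [sigmaCond_right]; simp)]
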